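/- Let n ≥ 1 and let f: O(-n-1) ⊗ Cⁿ → O(-n) ⊗ C^{n+1} be an injective morphism of sheaves on P² whose cokernel is torsion-free (e.g. the ideal sheaf of a finite subscheme). Then f is a stable Kronecker module: for every integer p with 1 ≤ p ≤ n and all p-dimensional subspaces M_p ⊂ Cⁿ, N_p ⊂ C^{n+1}, one does not have f(O(-n-1) ⊗ M_p) ⊆ O(-n) ⊗ N_p. -/

import Mathlib

open MvPolynomial

-- C-linear independence lifts to R = ℂ[x]-linear independence of constant vectors
private lemma aux_indep {m q : ℕ} (v : Fin q → (Fin m → ℂ))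
    (hv : LinearIndependent ℂ v) (c : Fin q → MvPolynomial (Fin 3) ℂ)
    (hc : ∑ i, c i • (fun k => (C (v i k) : MvPolynomial (Fin 3) ℂ)) = 0) :
    c = 0 := by
  classical
  have hker : LinearMap.ker (Fintype.linearCombination ℂ v) = ⊥ := by
    rw [LinearMap.ker_eq_bot']
    intro g hg
    rw [Fintype.linearCombination_apply] at hg
    funext i
    exact Fintype.linearIndependent_iff.1 hv g hg i
  obtain ⟨L, hL⟩ := (Fintype.linearCombination ℂ v).exists_leftInverse_of_injective hker
  have hLv : ∀ i, L (v i) = Pi.single i 1 := by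
    intro i
    have h1 : Fintype.linearCombination ℂ v (Pi.single i 1) = v i := by
      rw [Fintype.linearCombination_apply]
      simp [Pi.single_apply, ite_smul]
    calc L (v i) = (L.comp (Fintype.linearCombination ℂ v)) (Pi.single i 1) := by
          rw [LinearMap.comp_apply, h1]
      _ = Pi.single i 1 := by rw [hL]; rfl
  set G : Matrix (Fin q) (Fin m) ℂ := LinearMap.toMatrix' L with hG
  have hGmul : ∀ w : Fin m → ℂ, G.mulVec w = L w := by
    intro w
    rw [hG, ← Matrix.toLin'_apply, Matrix.toLin'_toMatrix']
  set GR : Matrix (Fin q) (Fin m) (MvPolynomial (Fin 3) ℂ) :=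
    G.map (fun z => (C z : MvPolynomial (Fin 3) ℂ)) with hGR
  have hcomm : ∀ w : Fin m → ℂ,
      GR.mulVec (fun k => (C (w k) : MvPolynomial (Fin 3) ℂ))
        = fun i => C (G.mulVec w i) := by
    intro w; funext i
    simp only [Matrix.mulVec, dotProduct, map_sum]
    exact Finset.sum_congr rfl fun j _ => by rw [hGR, Matrix.map_apply, ← map_mul]
  have h2 := congrArg GR.mulVecLin hc
  rw [map_sum, map_zero] at h2
  simp only [map_smul, Matrix.mulVecLin_apply] at h2
  funext k
  have h3 := congrFun h2 k
  simp only [hcomm, hGmul, hLv] at h3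
  simpa [Pi.single_apply] using h3

/-- Let `n ≥ 1` and let `f : O(-n-1) ⊗ ℂⁿ → O(-n) ⊗ ℂ^{n+1}` be an injective
morphism of sheaves on `P²` whose cokernel is torsion-free. Then `f` is a
stable Kronecker module: for every `p` with `1 ≤ p ≤ n` and all
`p`-dimensional subspaces `M ⊂ ℂⁿ`, `N ⊂ ℂ^{n+1}`, one does not have
`f(O(-n-1) ⊗ M) ⊆ O(-n) ⊗ N`.

Concretely, writing `R = ℂ[x₀,x₁,x₂]`, a morphism
`O(-n-1) ⊗ ℂⁿ → O(-n) ⊗ ℂ^{n+1}` is an `R`-linear map `f : Rⁿ → R^{n+1}`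
whose matrix entries (the components of the images of constant vectors) are
homogeneous of degree `1`; injectivity of the sheaf morphism is injectivity of
`f`, torsion-freeness of the cokernel is torsion-freeness of the `R`-module
`R^{n+1}/im(f)`, and `f(O(-n-1) ⊗ M) ⊆ O(-n) ⊗ N` means that `f` maps the
constant vectors from `M` into the `R`-submodule generated by `N`. -/
theorem statement15 (n : ℕ) (hn : 1 ≤ n)
    (f : (Fin n → MvPolynomial (Fin 3) ℂ) →ₗ[MvPolynomial (Fin 3) ℂ]
      (Fin (n + 1) → MvPolynomial (Fin 3) ℂ))
    (hdeg : ∀ (v : Fin n → ℂ) (j : Fin (n + 1)),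
      f (fun i => C (v i)) j ∈ homogeneousSubmodule (Fin 3) ℂ 1)
    (hinj : Function.Injective f)
    (htf : ∀ (r : MvPolynomial (Fin 3) ℂ)
      (x : (Fin (n + 1) → MvPolynomial (Fin 3) ℂ) ⧸ LinearMap.range f),
      r ≠ 0 → r • x = 0 → x = 0) :
    ∀ (p : ℕ), 1 ≤ p → p ≤ n →
      ∀ (M : Subspace ℂ (Fin n → ℂ)) (N : Subspace ℂ (Fin (n + 1) → ℂ)),
        Module.finrank ℂ M = p → Module.finrank ℂ N = p →
        ¬ (∀ v ∈ M, f (fun i => C (v i)) ∈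
            Submodule.span (MvPolynomial (Fin 3) ℂ)
              ((fun (w : Fin (n + 1) → ℂ) => fun j =>
                (C (w j) : MvPolynomial (Fin 3) ℂ)) ''
                (N : Set (Fin (n + 1) → ℂ)))) := by
  classical
  intro p hp hpn M N hM hN hcon
  let bM : Module.Basis (Fin p) ℂ M := Module.finBasisOfFinrankEq ℂ M hM
  let bN : Module.Basis (Fin p) ℂ N := Module.finBasisOfFinrankEq ℂ N hN
  set mv : Fin p → (Fin n → ℂ) := fun i => (bM i : Fin n → ℂ) with hmv_def
  set wv : Fin p → (Fin (n + 1) → ℂ) := fun j => (bN j : Fin (n + 1) → ℂ) with hwv_def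
  have hmv : LinearIndependent ℂ mv :=
    bM.linearIndependent.map' M.subtype (Submodule.ker_subtype M)
  -- the span of the image of N is spanned by the images of the basis vectors
  have hgen : ∀ x ∈ ((fun (w : Fin (n + 1) → ℂ) => fun j =>
        (C (w j) : MvPolynomial (Fin 3) ℂ)) '' (N : Set (Fin (n + 1) → ℂ))),
      x ∈ Submodule.span (MvPolynomial (Fin 3) ℂ)
        (Set.range fun j => (fun k => (C (wv j k) : MvPolynomial (Fin 3) ℂ))) := by
    rintro x ⟨w, hw, rfl⟩
    have hrepr := bN.sum_repr ⟨w, hw⟩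
    have hco : ∑ j, (bN.repr ⟨w, hw⟩) j • wv j = w := by
      have := congrArg (Subtype.val : N → (Fin (n + 1) → ℂ)) hrepr
      rw [Submodule.coe_sum] at this
      simp only [Submodule.coe_smul] at this
      exact this
    have hw' : (fun j => (C (w j) : MvPolynomial (Fin 3) ℂ))
        = ∑ j, (C ((bN.repr ⟨w, hw⟩) j) : MvPolynomial (Fin 3) ℂ)
            • (fun k => (C (wv j k) : MvPolynomial (Fin 3) ℂ)) := by
      funext k
      rw [Finset.sum_apply]
      have hwk : w k = ∑ j, (bN.repr ⟨w, hw⟩) j * wv j k := by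
        conv_lhs => rw [← hco]
        simp
      rw [hwk, map_sum]
      exact Finset.sum_congr rfl fun j _ => by
        rw [map_mul]; simp [smul_eq_mul]
    show (fun j => (C (w j) : MvPolynomial (Fin 3) ℂ)) ∈ _
    rw [hw']
    exact Submodule.sum_mem _ fun j _ => Submodule.smul_mem _ _
      (Submodule.subset_span ⟨j, rfl⟩)
  have hA : ∀ i, ∃ a : Fin p → MvPolynomial (Fin 3) ℂ,
      ∑ j, a j • (fun k => (C (wv j k) : MvPolynomial (Fin 3) ℂ))
        = f (fun k => C (mv i k)) := by
    intro i
    have hmem := (Submodule.span_le.2 hgen) (hcon (mv i) (bM i).2)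
    exact (Submodule.mem_span_range_iff_exists_fun _).1 hmem
  choose a ha using hA
  set A : Matrix (Fin p) (Fin p) (MvPolynomial (Fin 3) ℂ) := Matrix.of a with hAdef
  -- a helper for computing f on linear combinations of the mv's
  have hflin : ∀ c : Fin p → MvPolynomial (Fin 3) ℂ,
      f (∑ i, c i • (fun k => (C (mv i k) : MvPolynomial (Fin 3) ℂ)))
        = ∑ j, (∑ i, c i * a i j) • (fun k => (C (wv j k) : MvPolynomial (Fin 3) ℂ)) := by
    intro c
    rw [map_sum]
    simp only [map_smul, ← ha]
    simp only [Finset.smul_sum, smul_smul, Finset.sum_smul]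
    exact Finset.sum_comm
  by_cases hdet : A.det = 0
  · -- destabilizing matrix is singular: contradiction with injectivity
    obtain ⟨c, hc0, hcA⟩ := Matrix.exists_vecMul_eq_zero_iff.2 hdet
    have hvm : ∀ j, ∑ i, c i * a i j = 0 := by
      intro j
      have := congrFun hcA j
      simpa [Matrix.vecMul, dotProduct, hAdef] using this
    have hfu : f (∑ i, c i • (fun k => (C (mv i k) : MvPolynomial (Fin 3) ℂ))) = 0 := by
      rw [hflin]
      simp [hvm]
    have hu0 : (∑ i, c i • (fun k => (C (mv i k) : MvPolynomial (Fin 3) ℂ))) = 0 :=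
      hinj (by rw [hfu, map_zero])
    exact hc0 (aux_indep mv hmv c hu0)
  · -- nonsingular: by Cramer, det A kills the class of C(wv k0) in the cokernel
    have hp0 : 0 < p := hp
    set k0 : Fin p := ⟨0, hp0⟩ with hk0
    have hcram : ∀ j, ∑ i, A.adjugate k0 i * a i j
        = A.det * (if k0 = j then 1 else 0) := by
      intro j
      have := congrFun (congrFun (Matrix.adjugate_mul A) k0) j
      simpa [Matrix.mul_apply, Matrix.one_apply, hAdef] using this
    have hfu : f (∑ i, A.adjugate k0 i • (fun k => (C (mv i k) : MvPolynomial (Fin 3) ℂ)))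
        = A.det • (fun k => (C (wv k0 k) : MvPolynomial (Fin 3) ℂ)) := by
      rw [hflin]
      simp only [hcram, mul_ite, mul_one, mul_zero, ite_smul, zero_smul]
      rw [Finset.sum_ite_eq]
      simp
    have hmemrange : A.det • (fun k => (C (wv k0 k) : MvPolynomial (Fin 3) ℂ))
        ∈ LinearMap.range f := ⟨_, hfu⟩
    have hq : A.det • (Submodule.Quotient.mk (fun k => (C (wv k0 k) : MvPolynomial (Fin 3) ℂ))
        : (Fin (n + 1) → MvPolynomial (Fin 3) ℂ) ⧸ LinearMap.range f) = 0 := by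
      rw [← Submodule.Quotient.mk_smul, Submodule.Quotient.mk_eq_zero]
      exact hmemrange
    have hzero := htf A.det _ hdet hq
    rw [Submodule.Quotient.mk_eq_zero] at hzero
    obtain ⟨u, hu⟩ := hzero
    -- constant coefficients of everything in the range of f vanish
    have hstd : ∀ i : Fin n, (Pi.single i 1 : Fin n → MvPolynomial (Fin 3) ℂ)
        = fun k => C ((Pi.single i 1 : Fin n → ℂ) k) := by
      intro i; funext k
      by_cases h : k = i <;> simp [Pi.single_apply, h]
    have hcc : ∀ (i : Fin n) (j : Fin (n + 1)),
        constantCoeff (f (Pi.single i (1 : MvPolynomial (Fin 3) ℂ)) j) = 0 := by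
      intro i j
      have h1 := hdeg (Pi.single i 1) j
      rw [mem_homogeneousSubmodule] at h1
      rw [hstd i, constantCoeff_eq]
      exact h1.coeff_eq_zero (by simp)
    have hdecomp : u = ∑ i, u i • (Pi.single i (1 : MvPolynomial (Fin 3) ℂ) : Fin n → MvPolynomial (Fin 3) ℂ) := by
      funext k
      rw [Finset.sum_apply]
      simp [Pi.single_apply]
    have hwv0 : wv k0 = 0 := by
      funext j
      have h1 : constantCoeff (f u j) = wv k0 j := by
        rw [hu]; simp
      have h2 : constantCoeff (f u j) = 0 := by
        conv_lhs => rw [hdecomp]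
        rw [map_sum]
        rw [Finset.sum_apply]
        rw [map_sum]
        refine Finset.sum_eq_zero fun i _ => ?_
        simp only [map_smul, Pi.smul_apply, smul_eq_mul, map_mul, hcc, mul_zero]
      rw [h2] at h1
      exact h1.symm
    have : bN k0 = 0 := by
      ext : 1
      rw [show ((bN k0 : Fin (n + 1) → ℂ)) = wv k0 from rfl, hwv0]
      rfl
    exact bN.ne_zero k0 this
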